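/- arXiv:1211.0167 — 2 statements merged into one kernel-verified Lean document; each statement's English description precedes it below -/
import Mathlib

section
/- Let V be a finite-dimensional real vector space, ω a non-degenerate skew-symmetric bilinear form on V with induced isomorphism ω♯ : V → V*, and let π♯ = (ω♯)⁻¹ : V* → V. Suppose a : V → V is linear and commutes with ω in the sense that ω(aX, Y) = ω(X, aY) for all X, Y, and suppose a² + π♯ ∘ σ♯ = 0 for a 2-form σ on V. Then σ = −a*ω, i.e. σ(X,Y) = −ω(aX, aY) for all X, Y. -/
open Module

/-- Lemma 1: if `ω` is a non-degenerate skew form with `π♯ = (ω♯)⁻¹`,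
`a` commutes with `ω`, and `a² + π♯ ∘ σ♯ = 0`, then `σ = −a*ω`,
i.e. `σ(X,Y) = −ω(aX,aY)`. -/
theorem stmt_1 (V : Type*) [AddCommGroup V] [Module ℝ V] [FiniteDimensional ℝ V]
    (ω : V →ₗ[ℝ] Dual ℝ V) (hskew : ∀ X Y, ω X Y = -ω Y X)
    (hnd : ∀ X, (∀ Y, ω X Y = 0) → X = 0)
    (pish : Dual ℝ V →ₗ[ℝ] V)
    (hinv₁ : ∀ X, pish (ω X) = X) (hinv₂ : ∀ ξ, ω (pish ξ) = ξ)
    (a : V →ₗ[ℝ] V) (hcomm : ∀ X Y, ω (a X) Y = ω X (a Y))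
    (σ : V →ₗ[ℝ] Dual ℝ V)
    (hS3a : a ∘ₗ a + pish ∘ₗ σ = 0) :
    ∀ X Y, σ X Y = -ω (a X) (a Y) := by
  intro X Y
  have h : a (a X) + pish (σ X) = 0 := by
    have := LinearMap.congr_fun hS3a X
    simpa using this
  have h2 : pish (σ X) = -(a (a X)) := by rw [eq_neg_iff_add_eq_zero, add_comm]; exact h
  have h3 : σ X = ω (-(a (a X))) := by
    rw [← h2, hinv₂]
  have := congrArg (fun f => f Y) h3
  simp only [map_neg, LinearMap.neg_apply] at this
  rw [this, hcomm]
end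

section
/- Let V be a finite-dimensional real vector space with non-degenerate skew-symmetric form ω, π♯ = (ω♯)⁻¹, σ a skew-symmetric bilinear form on V with induced σ♯, and a : V → V commuting with ω. Then a² + π♯σ♯ = 0 holds if and only if σ(X,Y) = −ω(aX, aY) for all X, Y ∈ V. -/
open Module

/-- iff strengthening of Lemma 1: with `ω` non-degenerate skew,
`π♯ = (ω♯)⁻¹`, `σ` skew and `a` commuting with `ω`, one has `a² + π♯σ♯ = 0`
iff `σ(X,Y) = −ω(aX,aY)` for all `X, Y`. -/
theorem stmt_9 (V : Type*) [AddCommGroup V] [Module ℝ V] [FiniteDimensional ℝ V]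
    (ω : V →ₗ[ℝ] Dual ℝ V) (hskew : ∀ X Y, ω X Y = -ω Y X)
    (hnd : ∀ X, (∀ Y, ω X Y = 0) → X = 0)
    (pish : Dual ℝ V →ₗ[ℝ] V)
    (hinv₁ : ∀ X, pish (ω X) = X) (hinv₂ : ∀ ξ, ω (pish ξ) = ξ)
    (σ : V →ₗ[ℝ] Dual ℝ V) (hσskew : ∀ X Y, σ X Y = -σ Y X)
    (a : V →ₗ[ℝ] V) (hcomm : ∀ X Y, ω (a X) Y = ω X (a Y)) :
    a ∘ₗ a + pish ∘ₗ σ = 0 ↔ ∀ X Y, σ X Y = -ω (a X) (a Y) := by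
  constructor
  · intro h X Y
    have hX : a (a X) + pish (σ X) = 0 := by
      have := LinearMap.congr_fun h X
      simpa using this
    have h2 : pish (σ X) = -a (a X) := by
      rw [eq_neg_iff_add_eq_zero, add_comm]; exact hX
    have h3 : σ X = -ω (a (a X)) := by
      have := congrArg ω h2
      rw [hinv₂] at this
      simpa using this
    have h4 : σ X Y = -ω (a (a X)) Y := by rw [h3]; rfl
    rw [h4, hcomm]
  · intro h
    ext X
    have h3 : σ X = -ω (a (a X)) := by
      ext Y
      have : σ X Y = -ω (a (a X)) Y := by rw [h X Y, ← hcomm]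
      simpa using this
    simp only [LinearMap.add_apply, LinearMap.comp_apply, LinearMap.zero_apply, h3]
    rw [map_neg, hinv₁]
    abel
end
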